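/- arXiv:1610.00066 — 2 statements merged into one kernel-verified Lean document; each statement's English description precedes it below -/
import Mathlib

section
/- Let G be any group, n a positive integer, and u, g elements of G. If the set G_n(u,g) = {a ∈ G : a^n = (a u⁻¹)^n = g} is nonempty, then u commutes with g. -/
theorem commute_of_Gn_nonempty {G : Type*} [Group G] (n : ℕ) (hn : 0 < n) (u g : G)
    (h : {a : G | a ^ n = g ∧ (a * u⁻¹) ^ n = g}.Nonempty) : Commute u g := by
  obtain ⟨a, h1, h2⟩ := h
  have c1 : Commute a g := h1 ▸ (Commute.self_pow a n)
  have c2 : Commute (a * u⁻¹) g := h2 ▸ (Commute.self_pow _ n)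
  have : Commute ((a * u⁻¹)⁻¹ * a) g := (c2.inv_left).mul_left c1
  simpa [mul_assoc] using this
end

section
/- Let p be an odd prime, j a positive integer, and B the (p^j−1)×(p^j−1) matrix I + S where S is as in the nilpotence lemma (entries: S_{1,p^j−1} = −p^j, S_{2,1} = −1, S_{k+1,k} = 1 for 2 ≤ k ≤ p^j−2), with the first row taken modulo p^{j+1} and the other rows modulo p. Then the (1,1) entry of B^{p^j − 1} is congruent to p^j + 1 modulo p^{j+1}, and for 1 ≤ k ≤ p^j − 2 the matrix B^k has a −1 entry in its first column below the diagonal; in particular B^k ≠ I for 1 ≤ k ≤ p^j − 1. -/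
/-- The matrix `S` (0-indexed): `S_{0, p^j-2} = -p^j`, `S_{1,0} = -1`, and
`S_{k+1,k} = 1` for `1 ≤ k ≤ p^j - 3`; all other entries vanish. -/
def Smat (p j : ℕ) : Matrix (Fin (p ^ j - 1)) (Fin (p ^ j - 1)) ℤ :=
  Matrix.of fun i k =>
    if (i : ℕ) = 0 ∧ (k : ℕ) = p ^ j - 2 then -(p : ℤ) ^ j
    else if (i : ℕ) = (k : ℕ) + 1 then (if (k : ℕ) = 0 then -1 else 1)
    else 0

/-- The matrix `B = I + S` over the integers; congruences in its first row are
taken mod `p^{j+1}` and in the remaining rows mod `p`. -/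
def Bmat (p j : ℕ) : Matrix (Fin (p ^ j - 1)) (Fin (p ^ j - 1)) ℤ := 1 + Smat p j

/-! `S` maps `e₀ ↦ -e₁`, `eₖ ↦ eₖ₊₁` for `0 < k < p^j - 2` and `e_{p^j-2} ↦ -p^j e₀`, so
`S^m e₀ = -eₘ` for `0 < m < p^j - 1` and `S^{p^j-1} e₀ = p^j e₀`. Expanding
`B^k = ∑ C(k,m) S^m`, the `(k, 0)` entry of `B^k` is `-1` and the `(0, 0)` entry of
`B^{p^j-1}` is `1 + p^j`; neither is compatible with `B^k ≡ I`. -/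

section

variable {p j : ℕ}

lemma Smat_apply_of_ne_last (i k : Fin (p ^ j - 1)) (hk : (k : ℕ) ≠ p ^ j - 2) :
    Smat p j i k = if (i : ℕ) = k + 1 then (if (k : ℕ) = 0 then -1 else 1) else 0 := by
  simp [Smat, hk]

lemma Smat_pow_apply_zero (hn : 0 < p ^ j - 1) (m : ℕ) (hm : m < p ^ j - 1)
    (i : Fin (p ^ j - 1)) :
    (Smat p j ^ m) i ⟨0, hn⟩ = if (i : ℕ) = m then (if m = 0 then 1 else -1) else 0 := by
  induction m generalizing i with
  | zero => simp [Matrix.one_apply, Fin.ext_iff]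
  | succ m ih =>
    rw [pow_succ', Matrix.mul_apply, Finset.sum_eq_single ⟨m, by omega⟩]
    · rw [ih (by omega), Smat_apply_of_ne_last _ _ (by simp; omega)]
      split_ifs <;> simp_all
    · intro l _ hl
      rw [ih (by omega), if_neg (fun h => hl (Fin.ext h)), mul_zero]
    · simp

lemma Smat_pow_top_apply_zero_zero (h3 : 3 ≤ p ^ j) (hn : 0 < p ^ j - 1) :
    (Smat p j ^ (p ^ j - 1)) ⟨0, hn⟩ ⟨0, hn⟩ = (p : ℤ) ^ j := by
  have hsucc : Smat p j ^ (p ^ j - 1) = Smat p j * Smat p j ^ (p ^ j - 2) := by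
    rw [← pow_succ']; congr 1; omega
  rw [hsucc, Matrix.mul_apply, Finset.sum_eq_single ⟨p ^ j - 2, by omega⟩]
  · rw [Smat_pow_apply_zero hn _ (by omega)]
    simp [Smat, show p ^ j - 2 ≠ 0 by omega]
  · intro l _ hl
    rw [Smat_pow_apply_zero hn _ (by omega), if_neg (fun h => hl (Fin.ext h)), mul_zero]
  · simp

lemma Bmat_pow_apply (k : ℕ) (i l : Fin (p ^ j - 1)) :
    (Bmat p j ^ k) i l = ∑ m ∈ Finset.range (k + 1), (k.choose m : ℤ) * (Smat p j ^ m) i l := by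
  rw [Bmat, add_comm, (Commute.one_right (Smat p j)).add_pow, Matrix.sum_apply]
  refine Finset.sum_congr rfl fun m _ => ?_
  rw [one_pow, mul_one, ← Matrix.diagonal_natCast, Matrix.mul_diagonal, mul_comm]

lemma Bmat_pow_apply_self_zero (hn : 0 < p ^ j - 1) (k : ℕ) (hk0 : k ≠ 0) (hk : k < p ^ j - 1) :
    (Bmat p j ^ k) ⟨k, hk⟩ ⟨0, hn⟩ = -1 := by
  rw [Bmat_pow_apply, Finset.sum_eq_single k]
  · simp [Smat_pow_apply_zero hn k hk, hk0]
  · intro m hm hmk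
    rw [Smat_pow_apply_zero hn m (by simp at hm; omega)]
    simp [Ne.symm hmk]
  · simp

lemma Bmat_pow_top_apply_zero_zero (h3 : 3 ≤ p ^ j) (hn : 0 < p ^ j - 1) :
    (Bmat p j ^ (p ^ j - 1)) ⟨0, hn⟩ ⟨0, hn⟩ = (p : ℤ) ^ j + 1 := by
  rw [Bmat_pow_apply, Finset.sum_range_succ, Finset.sum_eq_single 0,
    Smat_pow_top_apply_zero_zero h3 hn, Smat_pow_apply_zero hn 0 hn]
  · simp [add_comm]
  · intro m hm hm0
    rw [Smat_pow_apply_zero hn m (by simp at hm; omega)]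
    simp [Ne.symm hm0]
  · simp; omega

end

theorem Bmat_pow_ne_one_general (p j : ℕ) (hodd : Odd p) (hn : 0 < p ^ j - 1) :
    ((Bmat p j ^ (p ^ j - 1)) ⟨0, hn⟩ ⟨0, hn⟩ ≡ (p : ℤ) ^ j + 1 [ZMOD ((p : ℤ) ^ (j + 1))]) ∧
    (∀ k : ℕ, 1 ≤ k → k ≤ p ^ j - 2 →
      ∃ i : Fin (p ^ j - 1), 0 < (i : ℕ) ∧
        (Bmat p j ^ k) i ⟨0, hn⟩ ≡ -1 [ZMOD (p : ℤ)]) ∧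
    (∀ k : ℕ, 1 ≤ k → k ≤ p ^ j - 1 →
      ¬ ((∀ c : Fin (p ^ j - 1),
            (Bmat p j ^ k) ⟨0, hn⟩ c ≡ (1 : Matrix (Fin (p ^ j - 1)) (Fin (p ^ j - 1)) ℤ) ⟨0, hn⟩ c
              [ZMOD ((p : ℤ) ^ (j + 1))]) ∧
          (∀ r c : Fin (p ^ j - 1), (r : ℕ) ≠ 0 →
            (Bmat p j ^ k) r c ≡ (1 : Matrix (Fin (p ^ j - 1)) (Fin (p ^ j - 1)) ℤ) r c
              [ZMOD (p : ℤ)]))) := by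
  have h3 : 3 ≤ p ^ j := by have := Nat.odd_iff.mp (hodd.pow (n := j)); omega
  have hp : 1 < p := (one_lt_pow_iff (n := j) (by rintro rfl; simp at hn)).mp (by omega)
  refine ⟨by rw [Bmat_pow_top_apply_zero_zero h3 hn], fun k hk1 hk2 => ?_, ?_⟩
  · exact ⟨⟨k, by omega⟩, hk1, by rw [Bmat_pow_apply_self_zero hn k (by omega)]⟩
  rintro k hk1 hk2 ⟨hrow, hrows⟩
  rcases (show k < p ^ j - 1 ∨ k = p ^ j - 1 by omega) with hk | rfl
  · have h := hrows ⟨k, hk⟩ ⟨0, hn⟩ (by simp; omega)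
    rw [Bmat_pow_apply_self_zero hn k (by omega),
      Matrix.one_apply_ne (by simp [Fin.ext_iff]; omega)] at h
    have : (p : ℤ) ≤ 1 := Int.le_of_dvd one_pos (by simpa using Int.modEq_zero_iff_dvd.mp h)
    omega
  · have h := hrow ⟨0, hn⟩
    rw [Bmat_pow_top_apply_zero_zero h3 hn, Matrix.one_apply_eq] at h
    have hdvd : (p : ℤ) ^ (j + 1) ∣ (p : ℤ) ^ j := by simpa using h.symm.dvd
    have : p ^ (j + 1) ∣ p ^ j := by exact_mod_cast hdvd
    exact absurd this (by simp [Nat.pow_dvd_pow_iff_le_right hp])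

theorem Bmat_pow_ne_one (p j : ℕ) (hp : p.Prime) (hodd : Odd p) (hj : 0 < j) (hn : 0 < p ^ j - 1) :
    ((Bmat p j ^ (p ^ j - 1)) ⟨0, hn⟩ ⟨0, hn⟩ ≡ (p : ℤ) ^ j + 1 [ZMOD ((p : ℤ) ^ (j + 1))]) ∧
    (∀ k : ℕ, 1 ≤ k → k ≤ p ^ j - 2 →
      ∃ i : Fin (p ^ j - 1), 0 < (i : ℕ) ∧
        (Bmat p j ^ k) i ⟨0, hn⟩ ≡ -1 [ZMOD (p : ℤ)]) ∧
    (∀ k : ℕ, 1 ≤ k → k ≤ p ^ j - 1 →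
      ¬ ((∀ c : Fin (p ^ j - 1),
            (Bmat p j ^ k) ⟨0, hn⟩ c ≡ (1 : Matrix (Fin (p ^ j - 1)) (Fin (p ^ j - 1)) ℤ) ⟨0, hn⟩ c
              [ZMOD ((p : ℤ) ^ (j + 1))]) ∧
          (∀ r c : Fin (p ^ j - 1), (r : ℕ) ≠ 0 →
            (Bmat p j ^ k) r c ≡ (1 : Matrix (Fin (p ^ j - 1)) (Fin (p ^ j - 1)) ℤ) r c
              [ZMOD (p : ℤ)]))) :=
  Bmat_pow_ne_one_general p j hodd hn
end
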